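/- arXiv:1706.01546 — 5 statements merged into one kernel-verified Lean document; each statement's English description precedes it below -/
import Mathlib

section
/- Let s > 2 be an integer. For digits c_1,...,c_n ∈ {1,...,s-1} and any p ∈ {1,...,s-2}, the cylinders of the set S = { ∑ α_k / s^{α_1+...+α_k} : α_k ∈ {1,...,s-1} } satisfy inf Δ_{c_1...c_n p} > sup Δ_{c_1...c_n [p+1]}; in particular Δ_{c_1...c_n p} and Δ_{c_1...c_n [p+1]} are disjoint. -/
/-- The set `S` of sums `∑ αₙ / s^(α₁+⋯+αₙ)` over digit sequences with values in `{1,…,s-1}`. -/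
def Sset (s : ℕ) : Set ℝ :=
  {x : ℝ | ∃ α : ℕ → ℕ, (∀ n, 1 ≤ α n ∧ α n ≤ s - 1) ∧
    x = ∑' n : ℕ, (α n : ℝ) / (s : ℝ) ^ (∑ k ∈ Finset.range (n + 1), α k)}

/-- The cylinder `Δ_{c₁…cₙ}` of rank `n`: the image of `Sset s` under the affine map
`y ↦ ∑_{k=1}^n cₖ/s^(c₁+⋯+cₖ) + s^{-(c₁+⋯+cₙ)} · y`. -/
def cyl (s n : ℕ) (c : ℕ → ℕ) : Set ℝ :=
  (fun y : ℝ =>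
    (∑ k ∈ Finset.range n, (c k : ℝ) / (s : ℝ) ^ (∑ j ∈ Finset.range (k + 1), c j)) +
      ((s : ℝ) ^ (∑ k ∈ Finset.range n, c k))⁻¹ * y) '' Sset s


/-!
Write `Δ_{c₁…cₙ} = φ(S)` with `φ` the increasing affine map in the definition of `cyl`; then
`Δ_{c₁…cₙq} = φ(q/s^q + s^{-q} S)`. Since `S ⊆ [0, 1/(s-1)]`, the cylinder `Δ_{c₁…cₙ[p+1]}` lies below
`φ((p + 1 + 1/(s-1))/s^{p+1})` and `Δ_{c₁…cₙp}` lies above `φ(p/s^p)`, and the first point is the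
smaller one because `p + 1 + 1/(s-1) < p s` for `p ≥ 1`, `s ≥ 3`.
-/

open Set

lemma Sset_nonempty {s : ℕ} (hs : 1 < s) : (Sset s).Nonempty :=
  ⟨_, fun _ => s - 1, fun _ => ⟨show 1 ≤ s - 1 by omega, le_rfl⟩, rfl⟩

lemma digit_div_pow_le {s : ℕ} (hs : 1 < s) {α : ℕ → ℕ} (hα : ∀ n, 1 ≤ α n) (n : ℕ) :
    (α n : ℝ) / (s : ℝ) ^ (∑ k ∈ Finset.range (n + 1), α k) ≤ (s : ℝ)⁻¹ ^ (n + 1) := by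
  have hlen : n + α n ≤ ∑ k ∈ Finset.range (n + 1), α k := by
    have : n ≤ ∑ k ∈ Finset.range n, α k := by
      simpa using Finset.card_nsmul_le_sum (Finset.range n) α 1 fun k _ => hα k
    rw [Finset.sum_range_succ]
    omega
  have hdigit : α n ≤ s ^ (α n - 1) := by
    have := Nat.lt_pow_self (n := α n - 1) hs
    have := hα n
    omega
  have key : α n * s ^ (n + 1) ≤ s ^ (∑ k ∈ Finset.range (n + 1), α k) :=
    calc α n * s ^ (n + 1) ≤ s ^ (α n - 1) * s ^ (n + 1) := by gcongr
      _ = s ^ (α n - 1 + (n + 1)) := (pow_add s _ _).symm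
      _ ≤ _ := Nat.pow_le_pow_right (by omega) (by have := hα n; omega)
  have hs0 : (0 : ℝ) < s := by exact_mod_cast (by omega : 0 < s)
  rw [inv_pow, ← one_div, div_le_div_iff₀ (by positivity) (by positivity), one_mul]
  exact_mod_cast key

lemma Sset_subset_Icc {s : ℕ} (hs : 1 < s) : Sset s ⊆ Icc 0 ((s : ℝ) - 1)⁻¹ := by
  rintro _ ⟨α, hα, rfl⟩
  have hs1 : (1 : ℝ) < s := by exact_mod_cast hs
  have hs0 : (s : ℝ) ≠ 0 := by positivity
  have hs1' : (s : ℝ) - 1 ≠ 0 := by linarith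
  have hgeo : HasSum (fun n : ℕ => (s : ℝ)⁻¹ ^ (n + 1)) ((s : ℝ) - 1)⁻¹ := by
    have h := (hasSum_geometric_of_lt_one (by positivity) (inv_lt_one_of_one_lt₀ hs1)).mul_left
      (s : ℝ)⁻¹
    rw [show (s : ℝ)⁻¹ * (1 - (s : ℝ)⁻¹)⁻¹ = ((s : ℝ) - 1)⁻¹ by field_simp] at h
    simpa only [← pow_succ'] using h
  have hle := digit_div_pow_le hs fun n => (hα n).1
  refine ⟨tsum_nonneg fun n => by positivity, ?_⟩
  exact ((Summable.of_nonneg_of_le (fun n => by positivity) hle hgeo.summable).tsum_le_tsum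
    hle hgeo.summable).trans_eq hgeo.tsum_eq

noncomputable def cylMap (s n : ℕ) (c : ℕ → ℕ) (y : ℝ) : ℝ :=
  (∑ k ∈ Finset.range n, (c k : ℝ) / (s : ℝ) ^ (∑ j ∈ Finset.range (k + 1), c j)) +
    ((s : ℝ) ^ (∑ k ∈ Finset.range n, c k))⁻¹ * y

lemma cyl_eq_image_cylMap (s n : ℕ) (c : ℕ → ℕ) : cyl s n c = cylMap s n c '' Sset s := rfl

lemma cylMap_strictMono {s : ℕ} (hs : 0 < s) (n : ℕ) (c : ℕ → ℕ) : StrictMono (cylMap s n c) :=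
  fun y y' h => by
    have : (0 : ℝ) < s := by exact_mod_cast hs
    unfold cylMap
    gcongr

lemma sum_range_update_of_le {M : Type*} [AddCommMonoid M] (f : ℕ → M) {m n : ℕ} (hm : m ≤ n)
    (q : M) :
    ∑ j ∈ Finset.range m, Function.update f n q j = ∑ j ∈ Finset.range m, f j :=
  Finset.sum_congr rfl fun j hj =>
    by rw [Function.update_of_ne (by simp only [Finset.mem_range] at hj; omega)]

lemma cylMap_succ_update (s n : ℕ) (c : ℕ → ℕ) (q : ℕ) (y : ℝ) :
    cylMap s (n + 1) (Function.update c n q) y =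
      cylMap s n c ((q : ℝ) / (s : ℝ) ^ q + ((s : ℝ) ^ q)⁻¹ * y) := by
  have hlen : ∑ k ∈ Finset.range (n + 1), Function.update c n q k =
      ∑ k ∈ Finset.range n, c k + q := by
    rw [Finset.sum_range_succ, Function.update_self, sum_range_update_of_le c le_rfl]
  have hprefix : ∀ k ∈ Finset.range n,
      ((Function.update c n q k : ℕ) : ℝ) /
          (s : ℝ) ^ (∑ j ∈ Finset.range (k + 1), Function.update c n q j) =
        (c k : ℝ) / (s : ℝ) ^ (∑ j ∈ Finset.range (k + 1), c j) := by
    intro k hk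
    rw [Finset.mem_range] at hk
    rw [Function.update_of_ne hk.ne, sum_range_update_of_le c hk]
  unfold cylMap
  rw [Finset.sum_range_succ, Finset.sum_congr rfl hprefix, hlen, Function.update_self, pow_add]
  ring

lemma last_digit_gap {s p : ℕ} (hs : 2 < s) (hp : 1 ≤ p) :
    ((p : ℝ) + 1 + ((s : ℝ) - 1)⁻¹) / (s : ℝ) ^ (p + 1) < (p : ℝ) / (s : ℝ) ^ p := by
  have hs3 : (3 : ℝ) ≤ s := by exact_mod_cast hs
  have hp1 : (1 : ℝ) ≤ p := by exact_mod_cast hp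
  have hinv : ((s : ℝ) - 1)⁻¹ < 1 := inv_lt_one_of_one_lt₀ (by linarith)
  have hX : (0 : ℝ) < (s : ℝ) ^ p := by positivity
  have key : (p : ℝ) + 1 + ((s : ℝ) - 1)⁻¹ < p * s := by nlinarith
  rw [div_lt_div_iff₀ (by positivity) hX, pow_succ]
  calc ((p : ℝ) + 1 + ((s : ℝ) - 1)⁻¹) * (s : ℝ) ^ p < (p * s) * (s : ℝ) ^ p :=
        mul_lt_mul_of_pos_right key hX
    _ = p * ((s : ℝ) ^ p * s) := by ring

theorem stmt8_general (s n : ℕ) (hs : 2 < s) (c : ℕ → ℕ) (p : ℕ) (hp : 1 ≤ p) :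
    sSup (cyl s (n + 1) (Function.update c n (p + 1))) <
        sInf (cyl s (n + 1) (Function.update c n p)) ∧
      Disjoint (cyl s (n + 1) (Function.update c n p))
        (cyl s (n + 1) (Function.update c n (p + 1))) := by
  have hΔ : ∀ q, cyl s (n + 1) (Function.update c n q) ⊆
      Icc (cylMap s (n + 1) (Function.update c n q) 0)
        (cylMap s (n + 1) (Function.update c n q) ((s : ℝ) - 1)⁻¹) := fun q => by
    rw [cyl_eq_image_cylMap]
    exact (image_mono (Sset_subset_Icc (by omega))).trans
      (cylMap_strictMono (by omega) _ _).monotone.image_Icc_subset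
  have hne : ∀ q, (cyl s (n + 1) (Function.update c n q)).Nonempty := fun q =>
    (Sset_nonempty (by omega)).image _
  have hgap : cylMap s (n + 1) (Function.update c n (p + 1)) ((s : ℝ) - 1)⁻¹ <
      cylMap s (n + 1) (Function.update c n p) 0 := by
    rw [cylMap_succ_update, cylMap_succ_update]
    refine cylMap_strictMono (by omega) n c ?_
    calc _ = ((p : ℝ) + 1 + ((s : ℝ) - 1)⁻¹) / (s : ℝ) ^ (p + 1) := by push_cast; ring
      _ < (p : ℝ) / (s : ℝ) ^ p := last_digit_gap hs hp
      _ = _ := by ring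
  have hsup := csSup_le (hne (p + 1)) fun x hx => (hΔ _ hx).2
  have hinf := le_csInf (hne p) fun x hx => (hΔ _ hx).1
  refine ⟨hsup.trans_lt (hgap.trans_le hinf), disjoint_left.2 fun x hxp hxp' => ?_⟩
  exact ((hΔ _ hxp').2.trans_lt hgap).not_ge (hΔ _ hxp).1

/-- Subcylinders are right-to-left situated: for `p ∈ {1,…,s-2}`,
`inf Δ_{c₁…cₙp} > sup Δ_{c₁…cₙ[p+1]}`; in particular the two cylinders are disjoint. -/
theorem stmt8 (s n : ℕ) (hs : 2 < s) (c : ℕ → ℕ)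
    (hc : ∀ k < n, 1 ≤ c k ∧ c k ≤ s - 1) (p : ℕ) (hp : 1 ≤ p) (hp' : p ≤ s - 2) :
    sSup (cyl s (n + 1) (Function.update c n (p + 1))) <
        sInf (cyl s (n + 1) (Function.update c n p)) ∧
      Disjoint (cyl s (n + 1) (Function.update c n p))
        (cyl s (n + 1) (Function.update c n (p + 1))) :=
  stmt8_general s n hs c p hp
end

section
/- Let s > 2 be an integer and S⁻ = { ∑_{n≥1} (-1)^n α_n / s^{α_1+...+α_n} : α_n ∈ {1,...,s-1} }. For digits c_1,...,c_n ∈ {1,...,s-1}, the cylinder Δ⁻_{c_1...c_n} (the set of elements of S⁻ whose first n digits are c_1,...,c_n) has diameter d(Δ⁻_{c_1...c_n}) = (s^{s-1} − s² + 2) / ((s^s − 1) · s^{c_1+...+c_n}). -/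
/-!
Shifting the digits gives `x = -(α₁ + y) / s^α₁` with `y ∈ S⁻` for every `x ∈ S⁻`. The alternating
expansions `(s-1, 1, s-1, 1, …)` and `(1, s-1, 1, s-1, …)` have the values
`M = (1 + s - s²)/(s^s - 1)` and `m = (s - 1 - s^(s-1))/(s^s - 1)`, and for every digit `a` one checks
`-(a + m)/s^a ≤ M` and `m ≤ -(a + M)/s^a`. Since `y ↦ -(a + y)/s^a` contracts by at least `1/s`,
the gaps `sup S⁻ - M` and `m - inf S⁻` are each at most `1/s` times the other, so `M` and `m` are the
maximum and minimum of `S⁻`. A cylinder of rank `n` is the image of `S⁻` under an affine map of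
ratio `±s^-(c₁+⋯+cₙ)`, so its diameter is `s^-(c₁+⋯+cₙ) (M - m)`.
-/

/-- The set `S⁻` of sums `∑ (-1)ⁿ αₙ / s^(α₁+⋯+αₙ)` over digit sequences with values in
`{1,…,s-1}` (the `n`-th term, counting from `1`, carries sign `(-1)ⁿ`). -/
def Sneg (s : ℕ) : Set ℝ :=
  {x : ℝ | ∃ α : ℕ → ℕ, (∀ n, 1 ≤ α n ∧ α n ≤ s - 1) ∧
    x = ∑' n : ℕ, (-1 : ℝ) ^ (n + 1) * (α n : ℝ) / (s : ℝ) ^ (∑ k ∈ Finset.range (n + 1), α k)}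

/-- The cylinder `Δ⁻_{c₁…cₙ}` of rank `n` of `S⁻`: the image of `Sneg s` under the affine map
`y ↦ ∑_{k=1}^n (-1)ᵏ cₖ/s^(c₁+⋯+cₖ) + (-1)ⁿ s^{-(c₁+⋯+cₙ)} · y`. -/
def cylNeg (s n : ℕ) (c : ℕ → ℕ) : Set ℝ :=
  (fun y : ℝ =>
    (∑ k ∈ Finset.range n,
        (-1 : ℝ) ^ (k + 1) * (c k : ℝ) / (s : ℝ) ^ (∑ j ∈ Finset.range (k + 1), c j)) +
      (-1 : ℝ) ^ n * ((s : ℝ) ^ (∑ k ∈ Finset.range n, c k))⁻¹ * y) '' Sneg s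

theorem pow_sub_one_eq_mul_pow_sub_two {M : Type*} [Monoid M] (x : M) {s : ℕ} (hs : 2 ≤ s) :
    x ^ (s - 1) = x * x ^ (s - 2) := by
  rw [← pow_succ']
  congr 1
  omega

theorem pow_eq_sq_mul_pow_sub_two {M : Type*} [Monoid M] (x : M) {s : ℕ} (hs : 2 ≤ s) :
    x ^ s = x ^ 2 * x ^ (s - 2) := by
  rw [← pow_add]
  congr 1
  omega

namespace Sneg

noncomputable def altTerm (s : ℕ) (α : ℕ → ℕ) (n : ℕ) : ℝ :=
  (-1 : ℝ) ^ (n + 1) * (α n : ℝ) / (s : ℝ) ^ (∑ k ∈ Finset.range (n + 1), α k)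

noncomputable def altSum (s : ℕ) (α : ℕ → ℕ) : ℝ := ∑' n, altTerm s α n

def IsDigitSeq (s : ℕ) (α : ℕ → ℕ) : Prop := ∀ n, 1 ≤ α n ∧ α n ≤ s - 1

theorem mem_iff {s : ℕ} {x : ℝ} : x ∈ Sneg s ↔ ∃ α, IsDigitSeq s α ∧ x = altSum s α :=
  Iff.rfl

variable {s : ℕ} {α : ℕ → ℕ}

namespace IsDigitSeq

theorem two_le (hα : IsDigitSeq s α) : 2 ≤ s := by
  have := hα 0
  omega

theorem tail (hα : IsDigitSeq s α) : IsDigitSeq s (fun n => α (n + 1)) :=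
  fun n => hα (n + 1)

theorem add_one_le_sum (hα : IsDigitSeq s α) (n : ℕ) :
    n + 1 ≤ ∑ k ∈ Finset.range (n + 1), α k := by
  simpa using Finset.card_nsmul_le_sum (Finset.range (n + 1)) α 1 fun k _ => (hα k).1

end IsDigitSeq

theorem abs_altTerm_le (hα : IsDigitSeq s α) (n : ℕ) : |altTerm s α n| ≤ (s : ℝ)⁻¹ ^ n := by
  have hs : (1 : ℝ) ≤ s := by exact_mod_cast hα.two_le.trans' one_le_two
  have hdigit : (α n : ℝ) ≤ s := by exact_mod_cast (hα n).2.trans (Nat.sub_le s 1)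
  rw [altTerm, abs_div, abs_mul, abs_pow, abs_neg, abs_one, one_pow, one_mul, Nat.abs_cast,
    abs_pow, Nat.abs_cast, div_le_iff₀ (by positivity)]
  calc (α n : ℝ) ≤ (s : ℝ)⁻¹ ^ n * s ^ (n + 1) := by
        rw [pow_succ, ← mul_assoc, ← mul_pow, inv_mul_cancel₀ (by positivity), one_pow, one_mul]
        exact hdigit
    _ ≤ (s : ℝ)⁻¹ ^ n * s ^ (∑ k ∈ Finset.range (n + 1), α k) := by
        gcongr
        exact hα.add_one_le_sum n

theorem hasSum_geometric_inv (hs : 1 < s) :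
    HasSum (fun n : ℕ => (s : ℝ)⁻¹ ^ n) (1 - (s : ℝ)⁻¹)⁻¹ :=
  hasSum_geometric_of_lt_one (by positivity)
    (inv_lt_one_of_one_lt₀ (by exact_mod_cast hs))

theorem summable_altTerm (hα : IsDigitSeq s α) : Summable (altTerm s α) :=
  (hasSum_geometric_inv hα.two_le).summable.of_norm_bounded (abs_altTerm_le hα)

theorem abs_altSum_le (hα : IsDigitSeq s α) : |altSum s α| ≤ (1 - (s : ℝ)⁻¹)⁻¹ :=
  tsum_of_norm_bounded (f := altTerm s α) (hasSum_geometric_inv hα.two_le) (abs_altTerm_le hα)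

theorem bddAbove : BddAbove (Sneg s) := by
  refine ⟨(1 - (s : ℝ)⁻¹)⁻¹, ?_⟩
  rintro x ⟨α, hα, rfl⟩
  exact (abs_le.mp (abs_altSum_le hα)).2

theorem bddBelow : BddBelow (Sneg s) := by
  refine ⟨-(1 - (s : ℝ)⁻¹)⁻¹, ?_⟩
  rintro x ⟨α, hα, rfl⟩
  exact (abs_le.mp (abs_altSum_le hα)).1

theorem altTerm_succ (n : ℕ) :
    altTerm s α (n + 1) = -(((s : ℝ) ^ α 0)⁻¹ * altTerm s (fun k => α (k + 1)) n) := by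
  rw [altTerm, altTerm, Finset.sum_range_succ' α (n + 1), add_comm _ (α 0), pow_add (s : ℝ),
    pow_succ (-1 : ℝ) (n + 1)]
  field_simp

theorem altSum_eq_tail (hα : IsDigitSeq s α) :
    altSum s α = -((α 0 + altSum s (fun n => α (n + 1))) / (s : ℝ) ^ α 0) := by
  rw [altSum, (summable_altTerm hα).tsum_eq_zero_add, tsum_congr altTerm_succ, tsum_neg,
    tsum_mul_left, altSum, altTerm]
  simp only [zero_add, pow_one, Finset.sum_range_one]
  field_simp
  ring

def alternating (a b n : ℕ) : ℕ := if Even n then a else b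

theorem alternating_tail (a b : ℕ) : (fun n => alternating a b (n + 1)) = alternating b a := by
  funext n
  by_cases h : Even n <;> simp [alternating, h, Nat.even_add_one]

theorem isDigitSeq_alternating {a b : ℕ} (ha : 1 ≤ a ∧ a ≤ s - 1) (hb : 1 ≤ b ∧ b ≤ s - 1) :
    IsDigitSeq s (alternating a b) := by
  intro n
  unfold alternating
  split_ifs <;> assumption

theorem altSum_alternating {a b : ℕ} (ha : 1 ≤ a ∧ a ≤ s - 1) (hb : 1 ≤ b ∧ b ≤ s - 1) :
    altSum s (alternating a b) = (b - a * (s : ℝ) ^ b) / ((s : ℝ) ^ (a + b) - 1) := by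
  have hab := isDigitSeq_alternating ha hb
  have hba := isDigitSeq_alternating hb ha
  have hx := altSum_eq_tail hab
  have hy := altSum_eq_tail hba
  rw [alternating_tail] at hx hy
  simp only [alternating, Even.zero, if_true] at hx hy
  have hs : (1 : ℝ) < s := by exact_mod_cast hab.two_le
  have hpow : (1 : ℝ) < (s : ℝ) ^ (a + b) := one_lt_pow₀ hs (by omega)
  set x := altSum s (alternating a b)
  set y := altSum s (alternating b a)
  have hx' : x * (s : ℝ) ^ a = -(a + y) := by rw [hx]; field_simp
  have hy' : y * (s : ℝ) ^ b = -(b + x) := by rw [hy]; field_simp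
  rw [eq_div_iff (by linarith), pow_add]
  linear_combination (s : ℝ) ^ b * hx' - hy'

noncomputable def maxSneg (s : ℕ) : ℝ := (1 + s - (s : ℝ) ^ 2) / ((s : ℝ) ^ s - 1)

noncomputable def minSneg (s : ℕ) : ℝ := (s - 1 - (s : ℝ) ^ (s - 1)) / ((s : ℝ) ^ s - 1)

theorem maxSneg_mem (hs : 2 ≤ s) : maxSneg s ∈ Sneg s := by
  have ha : 1 ≤ s - 1 ∧ s - 1 ≤ s - 1 := ⟨by omega, le_rfl⟩
  have hb : 1 ≤ 1 ∧ 1 ≤ s - 1 := ⟨le_rfl, by omega⟩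
  refine mem_iff.2 ⟨_, isDigitSeq_alternating ha hb, ?_⟩
  rw [altSum_alternating ha hb, Nat.sub_add_cancel (by omega : 1 ≤ s), Nat.cast_sub (by omega),
    maxSneg]
  ring

theorem minSneg_mem (hs : 2 ≤ s) : minSneg s ∈ Sneg s := by
  have ha : 1 ≤ 1 ∧ 1 ≤ s - 1 := ⟨le_rfl, by omega⟩
  have hb : 1 ≤ s - 1 ∧ s - 1 ≤ s - 1 := ⟨by omega, le_rfl⟩
  refine mem_iff.2 ⟨_, isDigitSeq_alternating ha hb, ?_⟩
  rw [altSum_alternating ha hb, Nat.add_sub_cancel' (by omega : 1 ≤ s), Nat.cast_sub (by omega),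
    minSneg]
  ring

theorem neg_add_minSneg_div_le_maxSneg (hs : 2 < s) {a : ℕ} (ha1 : 1 ≤ a) (ha2 : a ≤ s - 1) :
    -((a + minSneg s) / (s : ℝ) ^ a) ≤ maxSneg s := by
  have hs3 : (3 : ℝ) ≤ s := by exact_mod_cast hs
  have hQ : (1 : ℝ) ≤ (s : ℝ) ^ (s - 2) := one_le_pow₀ (by linarith)
  have hD : 0 < (s : ℝ) ^ s - 1 := sub_pos.2 (one_lt_pow₀ (by linarith) (by omega))
  suffices key : 0 ≤ a * ((s : ℝ) ^ s - 1) + (s - 1 - (s : ℝ) ^ (s - 1)) +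
      (1 + s - (s : ℝ) ^ 2) * (s : ℝ) ^ a by
    rw [neg_le, le_div_iff₀ (by positivity), maxSneg, minSneg, ← sub_nonneg]
    convert div_nonneg key hD.le using 1
    field_simp
    ring
  rw [pow_eq_sq_mul_pow_sub_two _ hs.le] at hD ⊢
  rw [pow_sub_one_eq_mul_pow_sub_two _ hs.le]
  rcases (show a = s - 1 ∨ a ≤ s - 2 by omega) with rfl | ha
  · rw [pow_sub_one_eq_mul_pow_sub_two _ hs.le, Nat.cast_sub (by omega)]
    ring_nf
    exact le_rfl
  · have hpow : (s : ℝ) ^ a ≤ (s : ℝ) ^ (s - 2) := pow_le_pow_right₀ (by linarith) ha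
    have ha' : (1 : ℝ) ≤ a := by exact_mod_cast ha1
    nlinarith [mul_nonneg (sub_nonneg.2 ha') hD.le,
      mul_nonneg (by nlinarith : (0 : ℝ) ≤ s ^ 2 - s - 1) (sub_nonneg.2 hpow)]

theorem minSneg_le_neg_add_maxSneg_div (hs : 2 < s) {a : ℕ} (ha1 : 1 ≤ a) (ha2 : a ≤ s - 1) :
    minSneg s ≤ -((a + maxSneg s) / (s : ℝ) ^ a) := by
  have hs3 : (3 : ℝ) ≤ s := by exact_mod_cast hs
  have hQ : (s : ℝ) ≤ (s : ℝ) ^ (s - 2) := le_self_pow₀ (by linarith) (by omega)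
  have hD : 0 < (s : ℝ) ^ s - 1 := sub_pos.2 (one_lt_pow₀ (by linarith) (by omega))
  suffices key : a * ((s : ℝ) ^ s - 1) + (1 + s - (s : ℝ) ^ 2) +
      (s - 1 - (s : ℝ) ^ (s - 1)) * (s : ℝ) ^ a ≤ 0 by
    rw [le_neg, div_le_iff₀ (by positivity), maxSneg, minSneg, ← sub_nonpos]
    convert div_nonpos_of_nonpos_of_nonneg key hD.le using 1
    field_simp
    ring
  rw [pow_eq_sq_mul_pow_sub_two _ hs.le] at hD ⊢
  rw [pow_sub_one_eq_mul_pow_sub_two _ hs.le]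
  rcases (show a = 1 ∨ 2 ≤ a by omega) with rfl | ha
  · ring_nf
    exact le_rfl
  · have hpow : (s : ℝ) ^ 2 ≤ (s : ℝ) ^ a := pow_le_pow_right₀ (by linarith) ha
    have ha' : (a : ℝ) ≤ s - 1 := by
      rw [← Nat.cast_one, ← Nat.cast_sub (by omega)]
      exact_mod_cast ha2
    nlinarith [mul_nonneg (sub_nonneg.2 ha') hD.le,
      mul_nonneg (by nlinarith : (0 : ℝ) ≤ s * (s : ℝ) ^ (s - 2) - s + 1) (sub_nonneg.2 hpow),
      mul_nonneg (by positivity : (0 : ℝ) ≤ s ^ 2) (sub_nonneg.2 hQ)]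

theorem altSum_le_of_mem_lowerBounds (hs : 2 < s) (hα : IsDigitSeq s α) {L : ℝ}
    (hL : L ∈ lowerBounds (Sneg s)) (hLm : L ≤ minSneg s) :
    altSum s α ≤ maxSneg s + (minSneg s - L) / s := by
  have hy : L ≤ altSum s (fun n => α (n + 1)) := hL ⟨_, hα.tail, rfl⟩
  have hsa : (s : ℝ) ≤ (s : ℝ) ^ α 0 :=
    le_self_pow₀ (by exact_mod_cast hs.le.trans' one_le_two) (Nat.one_le_iff_ne_zero.1 (hα 0).1)
  rw [altSum_eq_tail hα]
  calc -((α 0 + altSum s (fun n => α (n + 1))) / (s : ℝ) ^ α 0)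
      ≤ -((α 0 + L) / (s : ℝ) ^ α 0) := by gcongr
    _ = -((α 0 + minSneg s) / (s : ℝ) ^ α 0) + (minSneg s - L) / (s : ℝ) ^ α 0 := by ring
    _ ≤ maxSneg s + (minSneg s - L) / s := by
        gcongr
        exact neg_add_minSneg_div_le_maxSneg hs (hα 0).1 (hα 0).2

theorem le_altSum_of_mem_upperBounds (hs : 2 < s) (hα : IsDigitSeq s α) {U : ℝ}
    (hU : U ∈ upperBounds (Sneg s)) (hMU : maxSneg s ≤ U) :
    minSneg s - (U - maxSneg s) / s ≤ altSum s α := by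
  have hy : altSum s (fun n => α (n + 1)) ≤ U := hU ⟨_, hα.tail, rfl⟩
  have hsa : (s : ℝ) ≤ (s : ℝ) ^ α 0 :=
    le_self_pow₀ (by exact_mod_cast hs.le.trans' one_le_two) (Nat.one_le_iff_ne_zero.1 (hα 0).1)
  rw [altSum_eq_tail hα]
  calc minSneg s - (U - maxSneg s) / s
      ≤ -((α 0 + maxSneg s) / (s : ℝ) ^ α 0) - (U - maxSneg s) / (s : ℝ) ^ α 0 := by
        gcongr
        exact minSneg_le_neg_add_maxSneg_div hs (hα 0).1 (hα 0).2
    _ = -((α 0 + U) / (s : ℝ) ^ α 0) := by ring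
    _ ≤ -((α 0 + altSum s (fun n => α (n + 1))) / (s : ℝ) ^ α 0) := by gcongr

theorem sSup_eq_and_sInf_eq (hs : 2 < s) :
    sSup (Sneg s) = maxSneg s ∧ sInf (Sneg s) = minSneg s := by
  have hM := maxSneg_mem hs.le
  have hm := minSneg_mem hs.le
  have hMU : maxSneg s ≤ sSup (Sneg s) := le_csSup bddAbove hM
  have hLm : sInf (Sneg s) ≤ minSneg s := csInf_le bddBelow hm
  have hU : sSup (Sneg s) ≤ maxSneg s + (minSneg s - sInf (Sneg s)) / s := by
    refine csSup_le ⟨_, hM⟩ ?_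
    rintro _ ⟨α, hα, rfl⟩
    exact altSum_le_of_mem_lowerBounds hs hα (fun _ hx => csInf_le bddBelow hx) hLm
  have hL : minSneg s - (sSup (Sneg s) - maxSneg s) / s ≤ sInf (Sneg s) := by
    refine le_csInf ⟨_, hm⟩ ?_
    rintro _ ⟨α, hα, rfl⟩
    exact le_altSum_of_mem_upperBounds hs hα (fun _ hx => le_csSup bddAbove hx) hMU
  have hs1 : (1 : ℝ) < s := by exact_mod_cast hs.trans' one_lt_two
  rw [← sub_le_iff_le_add', le_div_iff₀ (by linarith)] at hU
  rw [sub_le_comm, le_div_iff₀ (by linarith)] at hL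
  constructor <;> nlinarith

theorem isGreatest (hs : 2 < s) : IsGreatest (Sneg s) (maxSneg s) :=
  ⟨maxSneg_mem hs.le, fun _ hx => (sSup_eq_and_sInf_eq hs).1 ▸ le_csSup bddAbove hx⟩

theorem isLeast (hs : 2 < s) : IsLeast (Sneg s) (minSneg s) :=
  ⟨minSneg_mem hs.le, fun _ hx => (sSup_eq_and_sInf_eq hs).2 ▸ csInf_le bddBelow hx⟩

theorem maxSneg_sub_minSneg (s : ℕ) :
    maxSneg s - minSneg s = ((s : ℝ) ^ (s - 1) - (s : ℝ) ^ 2 + 2) / ((s : ℝ) ^ s - 1) := by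
  rw [maxSneg, minSneg, ← sub_div]
  ring

end Sneg

theorem sSup_sub_sInf_image_affine {S : Set ℝ} {M m : ℝ} (hM : IsGreatest S M) (hm : IsLeast S m)
    (C e : ℝ) :
    sSup ((fun y => C + e * y) '' S) - sInf ((fun y => C + e * y) '' S) = |e| * (M - m) := by
  rcases le_or_gt 0 e with he | he
  · have hf : Monotone fun y => C + e * y := fun _ _ h => by dsimp only; gcongr
    rw [(hf.map_isGreatest hM).csSup_eq, (hf.map_isLeast hm).csInf_eq, abs_of_nonneg he]
    ring
  · have hf : Antitone fun y => C + e * y := fun _ _ h => by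
      dsimp only
      nlinarith
    rw [(hf.map_isLeast hm).csSup_eq, (hf.map_isGreatest hM).csInf_eq, abs_of_neg he]
    ring

theorem stmt11_general (s n : ℕ) (hs : 2 < s) (c : ℕ → ℕ) :
    sSup (cylNeg s n c) - sInf (cylNeg s n c) =
      ((s : ℝ) ^ (s - 1) - (s : ℝ) ^ 2 + 2) /
        (((s : ℝ) ^ s - 1) * (s : ℝ) ^ (∑ k ∈ Finset.range n, c k)) := by
  rw [cylNeg, sSup_sub_sInf_image_affine (Sneg.isGreatest hs) (Sneg.isLeast hs),
    Sneg.maxSneg_sub_minSneg, abs_mul, abs_pow, abs_neg, abs_one, one_pow, one_mul,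
    abs_inv, abs_of_pos (by positivity), inv_mul_eq_div, div_div, mul_comm]

/-- The diameter of the cylinder `Δ⁻_{c₁…cₙ}` equals
`(s^{s-1} - s² + 2) / ((s^s - 1) s^{c₁+⋯+cₙ})`. -/
theorem stmt11 (s n : ℕ) (hs : 2 < s) (c : ℕ → ℕ)
    (hc : ∀ k < n, 1 ≤ c k ∧ c k ≤ s - 1) :
    sSup (cylNeg s n c) - sInf (cylNeg s n c) =
      ((s : ℝ) ^ (s - 1) - (s : ℝ) ^ 2 + 2) /
        (((s : ℝ) ^ s - 1) * (s : ℝ) ^ (∑ k ∈ Finset.range n, c k)) :=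
  stmt11_general s n hs c
end

section
/- Let s > 2 be an integer and S⁻ = { ∑_{n≥1} (-1)^n α_n / s^{α_1+...+α_n} : α_n ∈ {1,...,s-1} }. For any digits c_1,...,c_{n-1} ∈ {1,...,s-1} and any c_n ∈ {1,...,s-2}, the cylinders Δ⁻_{c_1...c_{n-1}c_n} and Δ⁻_{c_1...c_{n-1}[c_n+1]} are disjoint. -/
/-! A point of `S⁻` lies in `[-1/s, 0)`: its series alternates, starts with `-α₁/s^α₁ ≥ -1/s`,
and each term is at most `1/s` times the previous one. Writing a point of the rank-`(n+1)`
cylinder with last digit `d` as `P + (-1)ⁿ⁺¹ s^(-A) (d + y)/s^d` with `y ∈ S⁻`, a common point of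
the cylinders for `d` and `d + 1` would give `s (d + y) = d + 1 + y'`, whereas
`s (d + y) ≥ s d - 1 ≥ d + 1 > d + 1 + y'` once `s ≥ 3` and `d ≥ 1`. -/

open Finset Filter

lemma tsum_neg_one_pow_mul_mem_Ioc {g : ℕ → ℝ} (hg : Antitone g) (hgs : Summable g)
    (h10 : g 1 < g 0) : ∑' n, (-1) ^ n * g n ∈ Set.Ioc 0 (g 0) := by
  have h := hgs.tendsto_alternating_series_tsum
  constructor
  · have := hg.alternating_series_le_tendsto h 1
    simp only [mul_one, sum_range_succ, range_one, sum_singleton, pow_zero, one_mul, pow_one,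
      neg_mul, add_neg_le_iff_le_add] at this
    linarith
  · simpa using hg.tendsto_le_alternating_series h 0

lemma natCast_div_pow_le_inv {s : ℝ} (hs : 2 ≤ s) {a : ℕ} (ha : 1 ≤ a) :
    (a : ℝ) / s ^ a ≤ s⁻¹ := by
  obtain ⟨b, rfl⟩ := Nat.exists_eq_add_of_le' ha
  have hb : (b : ℝ) + 1 ≤ s ^ b := by
    have := one_add_mul_le_pow (show -2 ≤ s - 1 by linarith) b
    rw [add_sub_cancel] at this
    nlinarith [b.cast_nonneg (α := ℝ)]
  rw [pow_succ, div_le_iff₀ (by positivity)]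
  field_simp
  push_cast
  linarith

noncomputable def digitTerm (s : ℝ) (α : ℕ → ℕ) (n : ℕ) : ℝ :=
  α n / s ^ (∑ k ∈ range (n + 1), α k)

section digitTerm

variable {s : ℝ} {α : ℕ → ℕ}

lemma digitTerm_pos (hs : 0 < s) (hα : ∀ n, 1 ≤ α n) (n : ℕ) : 0 < digitTerm s α n := by
  have : (1 : ℝ) ≤ α n := by exact_mod_cast hα n
  unfold digitTerm
  positivity

lemma digitTerm_zero_le (hs : 2 ≤ s) (hα : 1 ≤ α 0) : digitTerm s α 0 ≤ s⁻¹ := by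
  simpa [digitTerm] using natCast_div_pow_le_inv hs hα

lemma digitTerm_succ_le (hs : 2 ≤ s) (hα : ∀ n, 1 ≤ α n) (n : ℕ) :
    digitTerm s α (n + 1) ≤ s⁻¹ * digitTerm s α n := by
  have hαn : (1 : ℝ) ≤ α n := by exact_mod_cast hα n
  calc digitTerm s α (n + 1)
      = ((α (n + 1) : ℝ) / s ^ α (n + 1)) / s ^ (∑ k ∈ range (n + 1), α k) := by
        rw [digitTerm, sum_range_succ _ (n + 1), pow_add, div_div, mul_comm]
    _ ≤ s⁻¹ / s ^ (∑ k ∈ range (n + 1), α k) := by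
        gcongr; exact natCast_div_pow_le_inv hs (hα _)
    _ ≤ s⁻¹ * digitTerm s α n := by
        rw [digitTerm, mul_div_assoc']
        gcongr
        exact le_mul_of_one_le_right (by positivity) hαn

lemma summable_digitTerm (hs : 2 ≤ s) (hα : ∀ n, 1 ≤ α n) : Summable (digitTerm s α) := by
  refine summable_of_ratio_norm_eventually_le (r := s⁻¹) (inv_lt_one_of_one_lt₀ (by linarith))
    (Eventually.of_forall fun n => ?_)
  rw [Real.norm_of_nonneg (digitTerm_pos (by linarith) hα _).le,
    Real.norm_of_nonneg (digitTerm_pos (by linarith) hα _).le]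
  exact digitTerm_succ_le hs hα n

lemma antitone_digitTerm (hs : 2 ≤ s) (hα : ∀ n, 1 ≤ α n) : Antitone (digitTerm s α) :=
  antitone_nat_of_succ_le fun n => (digitTerm_succ_le hs hα n).trans <|
    mul_le_of_le_one_left (digitTerm_pos (by linarith) hα n).le (inv_le_one_of_one_le₀ (by linarith))

lemma digitTerm_one_lt_zero (hs : 2 ≤ s) (hα : ∀ n, 1 ≤ α n) :
    digitTerm s α 1 < digitTerm s α 0 :=
  (digitTerm_succ_le hs hα 0).trans_lt <|
    mul_lt_of_lt_one_left (digitTerm_pos (by linarith) hα 0) (inv_lt_one_of_one_lt₀ (by linarith))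

lemma tsum_alternating_digitTerm_mem_Ico (hs : 2 ≤ s) (hα : ∀ n, 1 ≤ α n) :
    ∑' n : ℕ, (-1 : ℝ) ^ (n + 1) * (α n : ℝ) / s ^ (∑ k ∈ range (n + 1), α k) ∈
      Set.Ico (-s⁻¹) 0 := by
  have hL := tsum_neg_one_pow_mul_mem_Ioc (antitone_digitTerm hs hα) (summable_digitTerm hs hα)
    (digitTerm_one_lt_zero hs hα)
  have hterm : ∀ n : ℕ, (-1 : ℝ) ^ (n + 1) * (α n : ℝ) / s ^ (∑ k ∈ range (n + 1), α k) =
      -((-1) ^ n * digitTerm s α n) := fun n => by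
    rw [digitTerm, pow_succ]; ring
  simp_rw [hterm, tsum_neg]
  have := digitTerm_zero_le hs (hα 0)
  constructor <;> linarith [hL.1, hL.2]

end digitTerm

lemma Sneg_subset_Ico {s : ℕ} (hs : 2 ≤ s) : Sneg s ⊆ Set.Ico (-(s : ℝ)⁻¹) 0 := by
  rintro _ ⟨α, hα, rfl⟩
  exact tsum_alternating_digitTerm_mem_Ico (by exact_mod_cast hs) fun n => (hα n).1

lemma cylNeg_succ_update (s n : ℕ) (c : ℕ → ℕ) (d : ℕ) :
    cylNeg s (n + 1) (Function.update c n d) =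
      (fun z : ℝ => (∑ k ∈ range n, (-1 : ℝ) ^ (k + 1) * (c k : ℝ) /
          (s : ℝ) ^ (∑ j ∈ range (k + 1), c j)) +
        (-1 : ℝ) ^ (n + 1) * ((s : ℝ) ^ (∑ k ∈ range n, c k))⁻¹ * z) ''
      ((fun y : ℝ => (d + y) / (s : ℝ) ^ d) '' Sneg s) := by
  have hpre : ∀ k ≤ n, ∑ j ∈ range k, Function.update c n d j = ∑ j ∈ range k, c j :=
    fun k hk => sum_congr rfl fun j hj =>
      Function.update_of_ne (by simp at hj; omega) d c
  rw [cylNeg, Set.image_image]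
  congr 1
  funext y
  rw [sum_range_succ, sum_range_succ, hpre n le_rfl, Function.update_self]
  rw [sum_congr rfl fun k hk => by
    rw [Function.update_of_ne (by simp at hk; omega) d c, hpre (k + 1) (by simp at hk; omega)]]
  rw [add_assoc, pow_add]
  ring

lemma disjoint_image_add_div_pow {s : ℕ} (hs : 3 ≤ s) {d : ℕ} (hd : 1 ≤ d) :
    Disjoint ((fun y : ℝ => (d + y) / (s : ℝ) ^ d) '' Sneg s)
      ((fun y : ℝ => ((d + 1 : ℕ) + y) / (s : ℝ) ^ (d + 1)) '' Sneg s) := by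
  rw [Set.disjoint_left]
  rintro _ ⟨y, hy, rfl⟩ ⟨z, hz, hyz⟩
  obtain ⟨hy, -⟩ := Sneg_subset_Ico (by omega) hy
  obtain ⟨-, hz⟩ := Sneg_subset_Ico (by omega) hz
  have hs' : (3 : ℝ) ≤ s := by exact_mod_cast hs
  have hd' : (1 : ℝ) ≤ d := by exact_mod_cast hd
  have hkey : (d + 1 : ℝ) + z = s * (d + y) := by
    rw [pow_succ] at hyz
    field_simp at hyz
    push_cast at hyz
    linarith
  have : -1 ≤ (s : ℝ) * y := by
    simpa [mul_neg, mul_inv_cancel₀ (by positivity : (s : ℝ) ≠ 0)] using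
      mul_le_mul_of_nonneg_left hy (Nat.cast_nonneg (α := ℝ) s)
  nlinarith

theorem stmt12_general (s n : ℕ) (hs : 2 < s) (c : ℕ → ℕ) (cn : ℕ) (hcn : 1 ≤ cn) :
    Disjoint (cylNeg s (n + 1) (Function.update c n cn))
      (cylNeg s (n + 1) (Function.update c n (cn + 1))) := by
  have hscale : (-1 : ℝ) ^ (n + 1) * ((s : ℝ) ^ (∑ k ∈ range n, c k))⁻¹ ≠ 0 := by
    have : (s : ℝ) ≠ 0 := by positivity
    simp [this]
  rw [cylNeg_succ_update, cylNeg_succ_update]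
  refine (Set.disjoint_image_iff ?_).mpr (disjoint_image_add_div_pow hs hcn)
  exact (add_right_injective _).comp (mul_right_injective₀ hscale)

/-- Adjacent cylinders of `S⁻` are disjoint: for `cₙ ∈ {1,…,s-2}`, the cylinders
`Δ⁻_{c₁…c_{n-1}cₙ}` and `Δ⁻_{c₁…c_{n-1}[cₙ+1]}` have empty intersection. -/
theorem stmt12 (s n : ℕ) (hs : 2 < s) (c : ℕ → ℕ)
    (hc : ∀ k < n, 1 ≤ c k ∧ c k ≤ s - 1) (cn : ℕ) (hcn : 1 ≤ cn) (hcn' : cn ≤ s - 2) :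
    Disjoint (cylNeg s (n + 1) (Function.update c n cn))
      (cylNeg s (n + 1) (Function.update c n (cn + 1))) :=
  stmt12_general s n hs c cn hcn
end

section
/- Let s > 2 be an integer. The set S⁻ = { ∑_{n≥1} (-1)^n α_n / s^{α_1+...+α_n} : α_n ∈ {1,...,s-1} } has Lebesgue measure zero. -/
/-!
Fix `n`. The first `n` digits of `α` determine the partial sum `∑_{k<n}`, and since each digit is
at most `s - 1` and the exponents `α₁ + ⋯ + α_{k+1} ≥ k + 1`, the tail beyond it is bounded by
`∑_{k≥n} (s-1) s^{-(k+1)} = s^{-n}`. Hence `S⁻` is covered by `(s-1)^n` intervals of length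
`2 s^{-n}`, whose total length `2 ((s-1)/s)^n` tends to zero.
-/

open MeasureTheory Metric Filter Topology Finset

theorem hasSum_sub_one_mul_inv_pow_add {b : ℝ} (hb : 1 < b) (n : ℕ) :
    HasSum (fun i ↦ (b - 1) * b⁻¹ ^ (i + n + 1)) (b⁻¹ ^ n) := by
  have hb0 : b ≠ 0 := by positivity
  have hb1 : b - 1 ≠ 0 := by linarith
  have hterm : (fun i ↦ (b - 1) * b⁻¹ ^ (i + n + 1)) =
      fun i ↦ (b - 1) * b⁻¹ ^ (n + 1) * b⁻¹ ^ i := funext fun i ↦ by ring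
  have hsum : b⁻¹ ^ n = (b - 1) * b⁻¹ ^ (n + 1) * (1 - b⁻¹)⁻¹ := by
    rw [pow_succ]; field_simp
  rw [hterm, hsum]
  exact (hasSum_geometric_of_lt_one (by positivity) (inv_lt_one_of_one_lt₀ hb)).mul_left _

theorem Real.volume_eq_zero_of_forall_subset_iUnion_closedBall {S : Set ℝ} {ι : ℕ → Type*}
    [∀ n, Fintype (ι n)] (c : ∀ n, ι n → ℝ) (r : ℕ → ℝ)
    (hS : ∀ n, S ⊆ ⋃ i, closedBall (c n i) (r n))
    (hr : Tendsto (fun n ↦ Fintype.card (ι n) * r n) atTop (𝓝 0)) :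
    volume S = 0 := by
  have hle : ∀ n, volume S ≤ ENNReal.ofReal (2 * (Fintype.card (ι n) * r n)) := fun n ↦ calc
    volume S ≤ ∑ i, volume (closedBall (c n i) (r n)) :=
      (measure_mono (hS n)).trans (measure_iUnion_fintype_le _ _)
    _ = ENNReal.ofReal (2 * (Fintype.card (ι n) * r n)) := by
      simp only [Real.volume_closedBall, sum_const, card_univ, nsmul_eq_mul]
      rw [← ENNReal.ofReal_natCast, ← ENNReal.ofReal_mul (by positivity), mul_left_comm]
  have hlim : Tendsto (fun n ↦ ENNReal.ofReal (2 * (Fintype.card (ι n) * r n))) atTop (𝓝 0) := by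
    simpa using ENNReal.tendsto_ofReal (hr.const_mul 2)
  exact le_antisymm (ge_of_tendsto' hlim hle) zero_le

namespace Sneg

noncomputable def term (s : ℕ) (α : ℕ → ℕ) (k : ℕ) : ℝ :=
  (-1) ^ (k + 1) * (α k : ℝ) / (s : ℝ) ^ (∑ j ∈ range (k + 1), α j)

variable {s : ℕ} {α : ℕ → ℕ}

theorem abs_term_le (hα : ∀ n, 1 ≤ α n ∧ α n ≤ s - 1) (k : ℕ) :
    |term s α k| ≤ (s - 1) * (s : ℝ)⁻¹ ^ (k + 1) := by
  have hs : 2 ≤ s := by have := hα 0; omega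
  have hs1 : (1 : ℝ) ≤ s := by exact_mod_cast hs.trans' one_le_two
  have hdigit : (α k : ℝ) ≤ s - 1 := by
    rw [le_sub_iff_add_le]; exact_mod_cast (by have := hα k; omega : α k + 1 ≤ s)
  have hexp : k + 1 ≤ ∑ j ∈ range (k + 1), α j := by
    simpa using card_nsmul_le_sum (range (k + 1)) α 1 fun j _ ↦ (hα j).1
  rw [term, abs_div, abs_mul, abs_pow, abs_neg, abs_one, one_pow, one_mul, Nat.abs_cast,
    abs_of_pos (by positivity), inv_pow, ← div_eq_mul_inv]
  exact div_le_div₀ (by linarith) hdigit (by positivity) (pow_le_pow_right₀ hs1 hexp)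

theorem abs_tsum_sub_sum_range_le (hα : ∀ n, 1 ≤ α n ∧ α n ≤ s - 1) (n : ℕ) :
    |∑' k, term s α k - ∑ k ∈ range n, term s α k| ≤ (s : ℝ)⁻¹ ^ n := by
  have hs : (1 : ℝ) < s := by exact_mod_cast (by have := hα 0; omega : 1 < s)
  have hsummable : Summable (term s α) :=
    .of_norm_bounded ((hasSum_sub_one_mul_inv_pow_add hs 0).summable) fun k ↦ abs_term_le hα k
  rw [← hsummable.sum_add_tsum_nat_add n, add_sub_cancel_left]
  exact tsum_of_norm_bounded (f := fun i ↦ term s α (i + n))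
    (hasSum_sub_one_mul_inv_pow_add hs n) fun i ↦ abs_term_le hα (i + n)

theorem sum_range_term_congr {α' : ℕ → ℕ} {n : ℕ} (h : ∀ k < n, α k = α' k) :
    ∑ k ∈ range n, term s α k = ∑ k ∈ range n, term s α' k := by
  refine sum_congr rfl fun k hk ↦ ?_
  have hk := mem_range.1 hk
  rw [term, term, h k hk, sum_congr rfl fun j hj ↦ h j (by grind)]

/-- A digit `d ∈ {1, …, s-1}` is stored in `Fin (s - 1)` as `d - 1`; after the prefix the
sequence continues with ones. -/
def extend {n : ℕ} (p : Fin n → Fin (s - 1)) (k : ℕ) : ℕ :=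
  if h : k < n then p ⟨k, h⟩ + 1 else 1

noncomputable def center {n : ℕ} (p : Fin n → Fin (s - 1)) : ℝ :=
  ∑ k ∈ range n, term s (extend p) k

theorem subset_iUnion_closedBall (n : ℕ) :
    Sneg s ⊆ ⋃ p : Fin n → Fin (s - 1), closedBall (center p) ((s : ℝ)⁻¹ ^ n) := by
  rintro x ⟨α, hα, rfl⟩
  let p : Fin n → Fin (s - 1) := fun k ↦ ⟨α k - 1, by have := hα k; omega⟩
  have hp : ∀ k < n, α k = extend p k := fun k hk ↦ by
    have := hα k; simp only [extend, hk, ↓reduceDIte, p]; omega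
  refine Set.mem_iUnion.2 ⟨p, ?_⟩
  rw [mem_closedBall, Real.dist_eq, center, ← sum_range_term_congr hp]
  exact abs_tsum_sub_sum_range_le hα n

end Sneg

/-- For an integer `s > 2`, the set `S⁻` has Lebesgue measure zero. -/
theorem stmt13 (s : ℕ) (hs : 2 < s) : MeasureTheory.volume (Sneg s) = 0 := by
  refine Real.volume_eq_zero_of_forall_subset_iUnion_closedBall _ _
    (Sneg.subset_iUnion_closedBall (s := s)) ?_
  have hratio : ((s - 1 : ℕ) : ℝ) * (s : ℝ)⁻¹ < 1 := by
    rw [← div_eq_mul_inv, div_lt_one (by positivity)]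
    exact_mod_cast Nat.sub_lt (by omega) one_pos
  simp only [Fintype.card_fun, Fintype.card_fin, Nat.cast_pow, ← mul_pow]
  exact tendsto_pow_atTop_nhds_zero_of_lt_one (by positivity) hratio
end

section
/- Let s > 2 be an integer. The set S⁻ = { ∑_{n≥1} (-1)^n α_n / s^{α_1+...+α_n} : α_n ∈ {1,...,s-1} } is nowhere dense in ℝ. -/
/-!
Splitting off the first digit `a` of an element of `S⁻` leaves `-s⁻ᵃ` times another element
of `S⁻`, so `S⁻` is covered by its images under the `s - 1` similarities
`y ↦ -(a + y) / sᵃ`, `1 ≤ a ≤ s - 1`. The same holds for its closure, which is compact since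
`S⁻` is bounded. The ratios `s⁻ᵃ` sum to less than `1`, so the Lebesgue measure of the closure
is at most a fraction `< 1` of itself, hence zero, and a null set has empty interior.
-/

open MeasureTheory Set Module

theorem closure_subset_biUnion_image_closure {X ι : Type*} [TopologicalSpace X] [T2Space X]
    {K : Set X} (hK : IsCompact (closure K)) (t : Finset ι) {f : ι → X → X}
    (hf : ∀ i, Continuous (f i)) (hsub : K ⊆ ⋃ i ∈ t, f i '' K) :
    closure K ⊆ ⋃ i ∈ t, f i '' closure K :=
  closure_minimal (hsub.trans <| biUnion_mono subset_rfl fun _ _ => image_mono subset_closure)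
    (t.finite_toSet.isCompact_biUnion fun i _ => hK.image (hf i)).isClosed

section Similarity

variable {E : Type*} [NormedAddCommGroup E] [NormedSpace ℝ E] [MeasurableSpace E] [BorelSpace E]
  [FiniteDimensional ℝ E] (μ : Measure E) [μ.IsAddHaarMeasure]

theorem addHaar_image_smul_add (r : ℝ) (v : E) (K : Set E) :
    μ ((fun y => r • y + v) '' K) = ENNReal.ofReal (|r| ^ finrank ℝ E) * μ K := by
  rw [← image_image (· + v) (r • ·), image_smul, image_add_right, measure_preimage_add_right,
    Measure.addHaar_smul, abs_pow]

theorem measure_eq_zero_of_subset_biUnion_image_smul_add {ι : Type*} {K : Set E} (hK : μ K ≠ ⊤)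
    (t : Finset ι) (r : ι → ℝ) (v : ι → E) (hr : ∑ i ∈ t, |r i| ^ finrank ℝ E < 1)
    (hsub : K ⊆ ⋃ i ∈ t, (fun y => r i • y + v i) '' K) : μ K = 0 := by
  by_contra h0
  have hcover : μ K ≤ ENNReal.ofReal (∑ i ∈ t, |r i| ^ finrank ℝ E) * μ K :=
    calc μ K ≤ ∑ i ∈ t, μ ((fun y => r i • y + v i) '' K) :=
          (measure_mono hsub).trans (measure_biUnion_finset_le t _)
      _ = ENNReal.ofReal (∑ i ∈ t, |r i| ^ finrank ℝ E) * μ K := by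
          simp_rw [addHaar_image_smul_add, ← Finset.sum_mul]
          rw [ENNReal.ofReal_sum_of_nonneg fun i _ => by positivity]
  have hlt : ENNReal.ofReal (∑ i ∈ t, |r i| ^ finrank ℝ E) * μ K < 1 * μ K :=
    (ENNReal.mul_lt_mul_iff_left h0 hK).2 (ENNReal.ofReal_lt_one.2 hr)
  exact (hcover.trans_lt hlt).ne (one_mul _).symm

end Similarity

noncomputable def snegTerm (s : ℕ) (α : ℕ → ℕ) (n : ℕ) : ℝ :=
  (-1 : ℝ) ^ (n + 1) * (α n : ℝ) / (s : ℝ) ^ (∑ k ∈ Finset.range (n + 1), α k)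

theorem snegTerm_succ (s : ℕ) (α : ℕ → ℕ) (n : ℕ) :
    snegTerm s α (n + 1) = -((s : ℝ) ^ α 0)⁻¹ * snegTerm s (fun k => α (k + 1)) n := by
  simp only [snegTerm, Finset.sum_range_succ' _ (n + 1), pow_add, pow_succ]
  ring

theorem abs_snegTerm_le {s : ℕ} {α : ℕ → ℕ} (hα : ∀ n, 1 ≤ α n ∧ α n ≤ s - 1) (n : ℕ) :
    |snegTerm s α n| ≤ ((s : ℝ)⁻¹) ^ n := by
  have hA : n + 1 ≤ ∑ k ∈ Finset.range (n + 1), α k := by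
    simpa using Finset.card_nsmul_le_sum (Finset.range (n + 1)) α 1 fun k _ => (hα k).1
  have hαs : (α n : ℝ) ≤ s := by exact_mod_cast (hα n).2.trans (Nat.sub_le s 1)
  have hs : (1 : ℝ) ≤ s := by exact_mod_cast (hα 0).1.trans ((hα 0).2.trans (Nat.sub_le s 1))
  calc |snegTerm s α n| = α n / (s : ℝ) ^ (∑ k ∈ Finset.range (n + 1), α k) := by
        simp [snegTerm, abs_div]
    _ ≤ s / (s : ℝ) ^ (n + 1) := by gcongr
    _ = ((s : ℝ)⁻¹) ^ n := by
        rw [pow_succ, inv_pow]; field_simp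

theorem summable_snegTerm {s : ℕ} (hs : 1 < s) {α : ℕ → ℕ}
    (hα : ∀ n, 1 ≤ α n ∧ α n ≤ s - 1) : Summable (snegTerm s α) :=
  .of_norm_bounded
    (summable_geometric_of_lt_one (by positivity) (inv_lt_one_of_one_lt₀ (by exact_mod_cast hs)))
    (abs_snegTerm_le hα)

theorem isBounded_sneg {s : ℕ} (hs : 1 < s) : Bornology.IsBounded (Sneg s) := by
  refine (Metric.isBounded_iff_subset_closedBall 0).2 ⟨(1 - (s : ℝ)⁻¹)⁻¹, ?_⟩
  rintro x ⟨α, hα, rfl⟩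
  exact mem_closedBall_zero_iff.2 <| tsum_of_norm_bounded
    (hasSum_geometric_of_lt_one (by positivity) (inv_lt_one_of_one_lt₀ (by exact_mod_cast hs)))
    (abs_snegTerm_le hα)

theorem sneg_subset_biUnion_image {s : ℕ} (hs : 1 < s) :
    Sneg s ⊆ ⋃ a ∈ Finset.Icc 1 (s - 1),
      (fun y : ℝ => (-((s : ℝ) ^ a)⁻¹) • y + -(a / (s : ℝ) ^ a)) '' Sneg s := by
  rintro x ⟨α, hα, rfl⟩
  refine mem_biUnion (x := α 0) (Finset.mem_Icc.2 (hα 0))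
    ⟨_, ⟨fun k => α (k + 1), fun n => hα (n + 1), rfl⟩, ?_⟩
  change _ = ∑' n, snegTerm s α n
  rw [(summable_snegTerm hs hα).tsum_eq_zero_add]
  simp only [snegTerm_succ, tsum_mul_left]
  simp only [smul_eq_mul, neg_mul, snegTerm, zero_add, pow_one, one_mul, Finset.range_one,
    Finset.sum_singleton]
  ring

theorem sum_Icc_inv_pow_lt_one {s : ℕ} (hs : 1 < s) :
    ∑ a ∈ Finset.Icc 1 (s - 1), ((s : ℝ) ^ a)⁻¹ < 1 := by
  have hs' : (1 : ℝ) < s := by exact_mod_cast hs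
  calc ∑ a ∈ Finset.Icc 1 (s - 1), ((s : ℝ) ^ a)⁻¹ ≤ ∑ a ∈ Finset.Icc 1 (s - 1), (s : ℝ)⁻¹ := by
        refine Finset.sum_le_sum fun a ha => ?_
        gcongr
        exact le_self_pow₀ hs'.le (by grind)
    _ = ((s : ℝ) - 1) / s := by
        rw [Finset.sum_const, Nat.card_Icc, nsmul_eq_mul, Nat.add_sub_cancel,
          Nat.cast_sub hs.le, Nat.cast_one, div_eq_mul_inv]
    _ < 1 := by rw [div_lt_one (by positivity)]; linarith

theorem volume_closure_sneg {s : ℕ} (hs : 1 < s) : volume (closure (Sneg s)) = 0 := by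
  have hK := (isBounded_sneg hs).isCompact_closure
  refine measure_eq_zero_of_subset_biUnion_image_smul_add volume hK.measure_lt_top.ne
    (Finset.Icc 1 (s - 1)) _ _ ?_
    (closure_subset_biUnion_image_closure hK _ (fun _ => by fun_prop)
      (sneg_subset_biUnion_image hs))
  simpa using sum_Icc_inv_pow_lt_one hs

/-- For an integer `s > 2`, the set `S⁻` is nowhere dense in `ℝ`. -/
theorem stmt14 (s : ℕ) (hs : 2 < s) : interior (closure (Sneg s)) = ∅ :=
  Measure.interior_eq_empty_of_null (volume_closure_sneg (by omega))
end
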